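/- arXiv:2101.01155 — 2 statements merged into one kernel-verified Lean document; each statement's English description precedes it below -/
import Mathlib

section
/- Non-cooperative game, case d < d0: suppose pλ > 0, x0 ≠ y0, and that the escape distance satisfies d = T·(v_max − v_min) < min(d_x(x0,y0), d_y(x0,y0)). Then (v_min, v_min) is the unique pure Nash equilibrium: (i) for every v ∈ Γ, u_x(x0, v, y0, v_min) ≤ u_x(x0, v_min, y0, v_min) and u_y(x0, v_min, y0, v) ≤ u_y(x0, v_min, y0, v_min); and (ii) any pure Nash equilibrium (v_x, v_y) ∈ Γ × Γ satisfies v_x = v_min and v_y = v_min. -/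
/-- The reduction of a real number `r` modulo the circuit length `D`: the relative
position on the torus, `(r) mod D = r − D·⌊r/D⌋ ∈ [0, D)`. -/
noncomputable def modD (D r : ℝ) : ℝ := r - D * (⌊r / D⌋ : ℝ)

/-- The directed (clockwise) distance from `x` to `y` on the circuit of length `D`. -/
noncomputable def dirX (D x y : ℝ) : ℝ := if x ≤ y then y - x else D + y - x

/-- The directed (clockwise) distance from `y` to `x` on the circuit of length `D`. -/
noncomputable def dirY (D x y : ℝ) : ℝ := dirX D y x

/-- Utility of player x: starting from `x0` and `y0`, driving at speeds `vx`, `vy`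
for time `T`, with fare `p`, passenger rate `lam` and cost rate `c`. -/
noncomputable def uX (D p lam c T x0 y0 vx vy : ℝ) : ℝ :=
  if modD D (x0 + T * vx) ≠ modD D (y0 + T * vy) then
    p * lam * dirX D (modD D (x0 + T * vx)) (modD D (y0 + T * vy)) - c * T
  else p * lam * (D / 2) - c * T

/-- Utility of player y, defined like `uX` with the directed distance `dirY`. -/
noncomputable def uY (D p lam c T x0 y0 vx vy : ℝ) : ℝ :=
  if modD D (x0 + T * vx) ≠ modD D (y0 + T * vy) then
    p * lam * dirY D (modD D (x0 + T * vx)) (modD D (y0 + T * vy)) - c * T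
  else p * lam * (D / 2) - c * T

lemma modD_mem {D r : ℝ} (hD : 0 < D) : 0 ≤ modD D r ∧ modD D r < D := by
  have hr : D * (r / D) = r := by field_simp
  have h1 := Int.floor_le (r / D)
  have h2 := Int.lt_floor_add_one (r / D)
  unfold modD
  constructor
  · nlinarith [mul_le_mul_of_nonneg_left h1 hD.le]
  · nlinarith [mul_lt_mul_of_pos_left h2 hD]

lemma modD_eq_self {D r : ℝ} (hD : 0 < D) (h0 : 0 ≤ r) (h1 : r < D) : modD D r = r := by
  have : ⌊r / D⌋ = 0 := by
    rw [Int.floor_eq_zero_iff]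
    constructor
    · positivity
    · rw [div_lt_one hD] at *; linarith [div_lt_one hD |>.mpr h1]
  simp [modD, this]

lemma modD_add_int {D r : ℝ} (hD : 0 < D) (k : ℤ) : modD D (r + D * k) = modD D r := by
  have hD' : (D : ℝ) ≠ 0 := ne_of_gt hD
  have h : (r + D * k) / D = r / D + k := by field_simp
  unfold modD
  rw [h, Int.floor_add_intCast]
  push_cast; ring

lemma modD_decomp {D r : ℝ} : r = modD D r + D * (⌊r / D⌋ : ℝ) := by unfold modD; ring


lemma dirX_modD {D a b : ℝ} (hD : 0 < D) :
    dirX D (modD D a) (modD D b) = modD D (b - a) := by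
  obtain ⟨ha0, ha1⟩ := modD_mem (r := a) hD
  obtain ⟨hb0, hb1⟩ := modD_mem (r := b) hD
  have hab : b - a = (modD D b - modD D a) + D * ((⌊b / D⌋ - ⌊a / D⌋ : ℤ) : ℝ) := by
    unfold modD; push_cast; ring
  rw [hab, modD_add_int hD]
  unfold dirX
  split_ifs with h
  · exact (modD_eq_self hD (by linarith) (by linarith)).symm
  · push_neg at h
    have key : modD D b - modD D a = (D + modD D b - modD D a) + D * ((-1 : ℤ) : ℝ) := by
      push_cast; ring
    rw [key, modD_add_int hD]
    exact (modD_eq_self hD (by linarith) (by linarith)).symm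

lemma dir_facts {D x0 y0 : ℝ} (hD : 0 < D) (hx0 : 0 ≤ x0) (hx1 : x0 < D)
    (hy0 : 0 ≤ y0) (hy1 : y0 < D) (hne : x0 ≠ y0) :
    0 < dirX D x0 y0 ∧ dirX D x0 y0 < D ∧ dirY D x0 y0 = D - dirX D x0 y0 := by
  unfold dirY dirX
  rcases lt_or_gt_of_ne hne with h | h
  · rw [if_pos h.le, if_neg (not_le.mpr h)]
    exact ⟨by linarith, by linarith, by ring⟩
  · rw [if_neg (not_le.mpr h), if_pos h.le]
    exact ⟨by linarith, by linarith, by ring⟩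



lemma u_val {D p lam c T vmin vmax x0 y0 vx vy : ℝ}
    (hD : 0 < D) (hT : 0 < T)
    (hx00 : 0 ≤ x0) (hx01 : x0 < D) (hy00 : 0 ≤ y0) (hy01 : y0 < D)
    (hne : x0 ≠ y0)
    (hesc : T * (vmax - vmin) < min (dirX D x0 y0) (dirY D x0 y0))
    (hvx : vx ∈ Set.Icc vmin vmax) (hvy : vy ∈ Set.Icc vmin vmax) :
    uX D p lam c T x0 y0 vx vy = p * lam * (dirX D x0 y0 + T * (vy - vx)) - c * T ∧
    uY D p lam c T x0 y0 vx vy = p * lam * (D - dirX D x0 y0 - T * (vy - vx)) - c * T := by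
  obtain ⟨hm0, hmD, hYX⟩ := dir_facts hD hx00 hx01 hy00 hy01 hne
  set m := dirX D x0 y0 with hmdef
  rw [hYX] at hesc
  have h1 : T * (vmax - vmin) < m := lt_of_lt_of_le hesc (min_le_left _ _)
  have h2 : T * (vmax - vmin) < D - m := lt_of_lt_of_le hesc (min_le_right _ _)
  have he1 : T * (vy - vx) < D - m := by nlinarith [hvx.1, hvy.2]
  have he2 : -m < T * (vy - vx) := by nlinarith [hvx.2, hvy.1]
  have hmeq : modD D (y0 - x0) = m := by
    have h := dirX_modD (a := x0) (b := y0) hD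
    rw [modD_eq_self hD hx00 hx01, modD_eq_self hD hy00 hy01] at h
    exact h.symm
  have hdec := modD_decomp (D := D) (r := y0 - x0)
  rw [hmeq] at hdec
  have hA : modD D ((y0 + T * vy) - (x0 + T * vx)) = m + T * (vy - vx) := by
    have hd : (y0 + T * vy) - (x0 + T * vx)
        = (m + T * (vy - vx)) + D * ((⌊(y0 - x0) / D⌋ : ℤ) : ℝ) := by linarith
    rw [hd, modD_add_int hD]
    exact modD_eq_self hD (by linarith) (by linarith)
  have hB : modD D ((x0 + T * vx) - (y0 + T * vy)) = D - m - T * (vy - vx) := by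
    have hd : (x0 + T * vx) - (y0 + T * vy)
        = (D - m - T * (vy - vx)) + D * ((-⌊(y0 - x0) / D⌋ - 1 : ℤ) : ℝ) := by
      push_cast; linarith
    rw [hd, modD_add_int hD]
    exact modD_eq_self hD (by linarith) (by linarith)
  have hneq : modD D (x0 + T * vx) ≠ modD D (y0 + T * vy) := by
    intro h
    have h1 := dirX_modD (a := x0 + T * vx) (b := y0 + T * vy) hD
    rw [h, hA] at h1
    simp [dirX] at h1
    linarith
  constructor
  · unfold uX
    rw [if_pos hneq, dirX_modD hD, hA]
  · unfold uY dirY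
    rw [if_pos hneq, dirX_modD hD, hB]

/-- Non-cooperative game, case d < d₀: if the initial minimal distance exceeds the
escape distance d = T·(v_max − v_min), then (v_min, v_min) is the unique pure Nash
equilibrium. -/
theorem far_apart_vmin_vmin_unique_nash
    (D p lam c T vmin vmax x0 y0 : ℝ)
    (hD : 0 < D) (hvmin : 0 < vmin) (hvv : vmin ≤ vmax) (hT : 0 < T)
    (hshort : T * vmax < D / 2)
    (hp : 0 ≤ p) (hlam : 0 < lam) (hc : 0 ≤ c) (hplam : 0 < p * lam)
    (hx0 : x0 ∈ Set.Ico 0 D) (hy0 : y0 ∈ Set.Ico 0 D)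
    (hne : x0 ≠ y0)
    (hesc : T * (vmax - vmin) < min (dirX D x0 y0) (dirY D x0 y0)) :
    ((∀ v ∈ Set.Icc vmin vmax,
        uX D p lam c T x0 y0 v vmin ≤ uX D p lam c T x0 y0 vmin vmin ∧
        uY D p lam c T x0 y0 vmin v ≤ uY D p lam c T x0 y0 vmin vmin) ∧
     (∀ vx ∈ Set.Icc vmin vmax, ∀ vy ∈ Set.Icc vmin vmax,
        (∀ v ∈ Set.Icc vmin vmax,
          uX D p lam c T x0 y0 v vy ≤ uX D p lam c T x0 y0 vx vy) →
        (∀ v ∈ Set.Icc vmin vmax,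
          uY D p lam c T x0 y0 vx v ≤ uY D p lam c T x0 y0 vx vy) →
        vx = vmin ∧ vy = vmin)) := by
  obtain ⟨hx00, hx01⟩ := hx0
  obtain ⟨hy00, hy01⟩ := hy0
  have hval : ∀ vx ∈ Set.Icc vmin vmax, ∀ vy ∈ Set.Icc vmin vmax,
      uX D p lam c T x0 y0 vx vy
        = p * lam * (dirX D x0 y0 + T * (vy - vx)) - c * T ∧
      uY D p lam c T x0 y0 vx vy
        = p * lam * (D - dirX D x0 y0 - T * (vy - vx)) - c * T :=
    fun vx hvx vy hvy => u_val hD hT hx00 hx01 hy00 hy01 hne hesc hvx hvy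
  have hmm : vmin ∈ Set.Icc vmin vmax := ⟨le_refl _, hvv⟩
  have hvv0 := hval vmin hmm vmin hmm
  constructor
  · intro v hv
    constructor
    · rw [(hval v hv vmin hmm).1, hvv0.1]
      nlinarith [mul_nonneg (mul_nonneg hplam.le hT.le) (sub_nonneg.mpr hv.1)]
    · rw [(hval vmin hmm v hv).2, hvv0.2]
      nlinarith [mul_nonneg (mul_nonneg hplam.le hT.le) (sub_nonneg.mpr hv.1)]
  · intro vx hvx vy hvy hNEx hNEy
    have hx := hNEx vmin hmm
    rw [(hval vmin hmm vy hvy).1, (hval vx hvx vy hvy).1] at hx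
    have hy := hNEy vmin hmm
    rw [(hval vx hvx vmin hmm).2, (hval vx hvx vy hvy).2] at hy
    constructor
    · exact le_antisymm (by nlinarith [mul_pos hplam hT]) hvx.1
    · exact le_antisymm (by nlinarith [mul_pos hplam hT]) hvy.1
end

section
/- Cooperative game, case d0 = 0: suppose v_min < v_max and x0 = y0. Define the final separation s(v_x, v_y) := min(d_x(x_T, y_T), d_y(x_T, y_T)) if x_T ≠ y_T and s(v_x, v_y) := 0 if x_T = y_T. Then the maximizers of s over Γ × Γ are exactly the two pairs (v_min, v_max) and (v_max, v_min), and the maximal value is the escape distance d = T·(v_max − v_min). -/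
/-- Final separation of the two buses: the minimal distance between the final
positions after driving at speeds `vx`, `vy` for time `T`, starting from `x0`, `y0`. -/
noncomputable def sep (D T x0 y0 vx vy : ℝ) : ℝ :=
  if modD D (x0 + T * vx) = modD D (y0 + T * vy) then 0
  else min (dirX D (modD D (x0 + T * vx)) (modD D (y0 + T * vy)))
           (dirY D (modD D (x0 + T * vx)) (modD D (y0 + T * vy)))

set_option maxHeartbeats 1000000

lemma modD_eq_fract {D : ℝ} (hD : 0 < D) (r : ℝ) : modD D r = D * Int.fract (r / D) := by
  unfold modD Int.fract
  field_simp

lemma modD_nonneg {D : ℝ} (hD : 0 < D) (r : ℝ) : 0 ≤ modD D r := by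
  rw [modD_eq_fract hD]
  exact mul_nonneg hD.le (Int.fract_nonneg _)

lemma modD_lt {D : ℝ} (hD : 0 < D) (r : ℝ) : modD D r < D := by
  rw [modD_eq_fract hD]
  nlinarith [Int.fract_lt_one (r / D)]

lemma sep_eq_abs {D T x0 vx vy : ℝ} (hD : 0 < D) (h : |T * vx - T * vy| < D / 2) :
    sep D T x0 x0 vx vy = |T * vx - T * vy| := by
  have ha0 := modD_nonneg hD (x0 + T * vx)
  have haD := modD_lt hD (x0 + T * vx)
  have hb0 := modD_nonneg hD (x0 + T * vy)
  have hbD := modD_lt hD (x0 + T * vy)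
  set a := modD D (x0 + T * vx) with haa
  set b := modD D (x0 + T * vy) with hbb
  set n : ℤ := ⌊(x0 + T * vy) / D⌋ - ⌊(x0 + T * vx) / D⌋ with hn
  have hab : a - b = (T * vx - T * vy) + D * (n : ℝ) := by
    rw [haa, hbb, hn]
    unfold modD
    push_cast
    ring
  have habs := abs_lt.mp h
  have hn2 : -2 < (n : ℝ) ∧ (n : ℝ) < 2 := by
    constructor <;> nlinarith
  have hn2' : -2 < n ∧ n < 2 :=
    ⟨by exact_mod_cast hn2.1, by exact_mod_cast hn2.2⟩
  have hncases : n = -1 ∨ n = 0 ∨ n = 1 := by omega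
  rcases hncases with h1 | h1 | h1 <;> rw [h1] at hab <;> push_cast at hab <;>
  rcases abs_cases (T * vx - T * vy) with ⟨he, hs⟩ | ⟨he, hs⟩ <;>
  · rw [he]
    simp only [sep, dirX, dirY, ← haa, ← hbb, min_def]
    split_ifs <;> linarith

/-- Cooperative game, case d₀ = 0: if the buses start at the same position, the
maximizers of the final separation over Γ × Γ are exactly (v_min, v_max) and
(v_max, v_min), and the maximal value is the escape distance d = T·(v_max − v_min). -/
theorem coop_same_start
    (D T vmin vmax x0 y0 : ℝ)
    (hD : 0 < D) (hvmin : 0 < vmin) (hvv : vmin < vmax) (hT : 0 < T)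
    (hshort : T * vmax < D / 2)
    (hx0 : x0 ∈ Set.Ico 0 D) (hy0 : y0 ∈ Set.Ico 0 D)
    (hsame : x0 = y0) :
    (∀ vx ∈ Set.Icc vmin vmax, ∀ vy ∈ Set.Icc vmin vmax,
      sep D T x0 y0 vx vy ≤ T * (vmax - vmin)) ∧
    sep D T x0 y0 vmin vmax = T * (vmax - vmin) ∧
    sep D T x0 y0 vmax vmin = T * (vmax - vmin) ∧
    (∀ vx ∈ Set.Icc vmin vmax, ∀ vy ∈ Set.Icc vmin vmax,
      sep D T x0 y0 vx vy = T * (vmax - vmin) →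
        (vx = vmin ∧ vy = vmax) ∨ (vx = vmax ∧ vy = vmin)) := by
  subst hsame
  have hkey : ∀ vx ∈ Set.Icc vmin vmax, ∀ vy ∈ Set.Icc vmin vmax,
      sep D T x0 x0 vx vy = |T * vx - T * vy| := by
    intro vx hvx vy hvy
    refine sep_eq_abs hD ?_
    rcases abs_cases (T * vx - T * vy) with ⟨he, _⟩ | ⟨he, _⟩ <;> rw [he] <;>
      nlinarith [hvx.1, hvx.2, hvy.1, hvy.2,
        mul_nonneg hT.le (sub_nonneg.mpr hvx.1), mul_nonneg hT.le (sub_nonneg.mpr hvy.1),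
        mul_nonneg hT.le (sub_nonneg.mpr hvx.2), mul_nonneg hT.le (sub_nonneg.mpr hvy.2)]
  have hmemmin : vmin ∈ Set.Icc vmin vmax := ⟨le_rfl, hvv.le⟩
  have hmemmax : vmax ∈ Set.Icc vmin vmax := ⟨hvv.le, le_rfl⟩
  refine ⟨?_, ?_, ?_, ?_⟩
  · intro vx hvx vy hvy
    rw [hkey vx hvx vy hvy]
    rcases abs_cases (T * vx - T * vy) with ⟨he, _⟩ | ⟨he, _⟩ <;> rw [he] <;>
      nlinarith [mul_nonneg hT.le (sub_nonneg.mpr hvx.1), mul_nonneg hT.le (sub_nonneg.mpr hvy.1),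
        mul_nonneg hT.le (sub_nonneg.mpr hvx.2), mul_nonneg hT.le (sub_nonneg.mpr hvy.2)]
  · rw [hkey vmin hmemmin vmax hmemmax, abs_of_nonpos (by nlinarith)]
    ring
  · rw [hkey vmax hmemmax vmin hmemmin, abs_of_nonneg (by nlinarith)]
    ring
  · intro vx hvx vy hvy heq
    rw [hkey vx hvx vy hvy] at heq
    rcases abs_cases (T * vx - T * vy) with ⟨he, _⟩ | ⟨he, _⟩ <;> rw [he] at heq
    · right
      have h1 : T * (vx - vy) = T * (vmax - vmin) := by ring_nf; ring_nf at heq; linarith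
      have h2 : vx - vy = vmax - vmin := mul_left_cancel₀ hT.ne' h1
      exact ⟨le_antisymm hvx.2 (by linarith [hvy.1]), le_antisymm (by linarith [hvx.2]) hvy.1⟩
    · left
      have h1 : T * (vy - vx) = T * (vmax - vmin) := by ring_nf; ring_nf at heq; linarith
      have h2 : vy - vx = vmax - vmin := mul_left_cancel₀ hT.ne' h1
      exact ⟨le_antisymm (by linarith [hvy.2]) hvx.1, le_antisymm hvy.2 (by linarith [hvx.1])⟩
end
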